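/- arXiv:2109.02500 — 3 statements merged into one kernel-verified Lean document; each statement's English description precedes it below -/
import Mathlib

section
/- Let 0<q<1. For every n≥0 and every x∈ℂ, the q-Bernoulli polynomial β_n(x;q) has the expansion β_n(x;q) = Σ_{k=0}^{n} β_{n−k}(0;q) · (q^{k²/4}/(q;q)_k) · ρ_k(x), where β_m(0;q) are the q-Bernoulli numbers (the values of β_m(·;q) at 0). -/
open Complex Filter

noncomputable section

/-- finite q-Pochhammer `(a;q)_n` -/
def qp (q a : ℂ) (n : ℕ) : ℂ := ∏ j ∈ Finset.range n, (1 - a * q ^ j)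

/-- infinite q-Pochhammer `(a;q)_∞` -/
def qpInf (q a : ℂ) : ℂ := ∏' j : ℕ, (1 - a * q ^ j)

/-- the real power `q ^ t` viewed as a complex number -/
def qpow (q t : ℝ) : ℂ := ((q ^ t : ℝ) : ℂ)

/-- `ρ` is the family of polynomials `ρ_n` -/
def IsRho (q : ℝ) (ρ : ℕ → ℂ → ℂ) : Prop :=
  (∀ x : ℂ, ρ 0 x = 1) ∧
  ∀ n : ℕ, 1 ≤ n →
    (∃ P : Polynomial ℂ, P.natDegree = n ∧ ∀ x : ℂ, ρ n x = P.eval x) ∧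
    ∀ z : ℂ, z ≠ 0 →
      ρ n ((z + z⁻¹) / 2) =
        (1 + z ^ 2) * qp ((q : ℂ) ^ 2) (-((q : ℂ) ^ ((2 : ℤ) - (n : ℤ)) * z ^ 2)) (n - 1) *
          z ^ (-(n : ℤ))

/-- the q-exponential function `𝓔_q(x;w)` -/
def Eqf (q : ℝ) (ρ : ℕ → ℂ → ℂ) (x w : ℂ) : ℂ :=
  ∑' n : ℕ, (qpow q ((n : ℝ) ^ 2 / 4) / qp (q : ℂ) (q : ℂ) n) * ρ n x * w ^ n

/-- Suslov's q-Bernoulli polynomials `𝓑_n(x;q)` -/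
def IsBigB (q : ℝ) (ρ : ℕ → ℂ → ℂ) (B : ℕ → ℂ → ℂ) : Prop :=
  (∀ n : ℕ, ∃ P : Polynomial ℂ, P.natDegree = n ∧ ∀ x : ℂ, B n x = P.eval x) ∧
  ∀ x : ℂ, ∃ r : ℝ, 0 < r ∧ r ≤ 1 ∧ ∀ w : ℂ, ‖w‖ < r → ∃ S : ℂ,
    HasSum (fun n : ℕ => B n x * w ^ n) S ∧
    S * (qpInf (qpow q (1/2)) (-w) - qpInf (qpow q (1/2)) w) =
      w * qpInf ((q : ℂ) ^ 2) ((q : ℂ) * w ^ 2) * Eqf q ρ x w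

/-- the q-Bernoulli polynomials `β_n(x;q)` -/
def IsSmallB (q : ℝ) (ρ : ℕ → ℂ → ℂ) (B : ℕ → ℂ → ℂ) : Prop :=
  (∀ n : ℕ, ∃ P : Polynomial ℂ, P.natDegree = n ∧ ∀ x : ℂ, B n x = P.eval x) ∧
  ∀ x : ℂ, ∃ r : ℝ, 0 < r ∧ r ≤ 1 ∧ ∀ w : ℂ, ‖w‖ < r → ∃ S : ℂ,
    HasSum (fun n : ℕ => B n x * w ^ n) S ∧
    S * (qpInf (qpow q (1/2)) (-w) - qpInf (qpow q (1/2)) w) =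
      w * qpInf (qpow q (1/2)) w * Eqf q ρ x w

/-- the q-Euler polynomials `𝓔_n(x;q)` -/
def IsBigE (q : ℝ) (ρ : ℕ → ℂ → ℂ) (E : ℕ → ℂ → ℂ) : Prop :=
  (∀ n : ℕ, ∃ P : Polynomial ℂ, P.natDegree = n ∧ ∀ x : ℂ, E n x = P.eval x) ∧
  ∀ x : ℂ, ∃ r : ℝ, 0 < r ∧ r ≤ 1 ∧ ∀ w : ℂ, ‖w‖ < r → ∃ S : ℂ,
    HasSum (fun n : ℕ => E n x * w ^ n) S ∧
    S * (qpInf (qpow q (1/2)) (-w) + qpInf (qpow q (1/2)) w) =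
      qpInf ((q : ℂ) ^ 2) ((q : ℂ) * w ^ 2) * Eqf q ρ x w

/-- the q-Euler polynomials `Ẽ_n(x;q)` -/
def IsTildeE (q : ℝ) (ρ : ℕ → ℂ → ℂ) (E : ℕ → ℂ → ℂ) : Prop :=
  (∀ n : ℕ, ∃ P : Polynomial ℂ, P.natDegree = n ∧ ∀ x : ℂ, E n x = P.eval x) ∧
  ∀ x : ℂ, ∃ r : ℝ, 0 < r ∧ r ≤ 1 ∧ ∀ w : ℂ, ‖w‖ < r → ∃ S : ℂ,
    HasSum (fun n : ℕ => E n x * w ^ n) S ∧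
    S * (qpInf (qpow q (1/2)) (-w) + qpInf (qpow q (1/2)) w) =
      2 * qpInf (qpow q (1/2)) w * Eqf q ρ x w

/-- `g` is the Askey–Wilson derivative `𝓓_q f` -/
def AWEq (q : ℝ) (f g : ℂ → ℂ) : Prop :=
  ∀ z : ℂ, z ≠ 0 →
    g ((z + z⁻¹) / 2) =
      (f ((qpow q (1/2) * z + qpow q (-(1/2)) * z⁻¹) / 2) -
          f ((qpow q (-(1/2)) * z + qpow q (1/2) * z⁻¹) / 2)) /
        (((qpow q (1/2) - qpow q (-(1/2))) / 2) * (z - z⁻¹))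

/-- `Df` is the sequence of iterated Askey–Wilson derivatives of `f`, all entire -/
def IsAWIter (q : ℝ) (f : ℂ → ℂ) (Df : ℕ → ℂ → ℂ) : Prop :=
  Df 0 = f ∧ (∀ k : ℕ, Differentiable ℂ (Df k)) ∧ ∀ k : ℕ, AWEq q (Df k) (Df (k + 1))

/-- growth hypothesis: q-exponential growth of order less than `2 ln(1/q)`, or of
order `2 ln(1/q)` and type less than `2 ln 2 / ln(1/q)` -/
def Growth (q : ℝ) (f : ℂ → ℂ) : Prop :=
  (∃ K : ℝ, 0 < K ∧ ∃ α c : ℝ, 0 < c ∧ c < 1 ∧ ∀ x : ℂ, 1 ≤ ‖x‖ →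
      ‖f x‖ ≤ K * ‖x‖ ^ α * Real.exp (c * (Real.log ‖x‖) ^ 2 / Real.log (1 / q))) ∨
  (∃ K : ℝ, 0 < K ∧ ∃ α : ℝ, α < 2 * Real.log 2 / Real.log (1 / q) ∧ ∀ x : ℂ, 1 ≤ ‖x‖ →
      ‖f x‖ ≤ K * ‖x‖ ^ α * Real.exp ((Real.log ‖x‖) ^ 2 / Real.log (1 / q)))

/-- the basic sine at `η`: `S_q(η;w)` -/
def Seta (q : ℝ) (w : ℂ) : ℂ :=
  (qpInf (qpow q (1/2)) (-(I * w)) - qpInf (qpow q (1/2)) (I * w)) /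
    (2 * I * qpInf ((q : ℂ) ^ 2) (-((q : ℂ) * w ^ 2)))

/-- the basic cosine at `η`: `C_q(η;w)` -/
def Ceta (q : ℝ) (w : ℂ) : ℂ :=
  (qpInf (qpow q (1/2)) (-(I * w)) + qpInf (qpow q (1/2)) (I * w)) /
    (2 * qpInf ((q : ℂ) ^ 2) (-((q : ℂ) * w ^ 2)))

/-- `η = (q^{1/4} + q^{-1/4})/2` as a complex number -/
def etaC (q : ℝ) : ℂ := (qpow q (1/4) + qpow q (-(1/4))) / 2

/-!
At `x = 0` we have `𝓔_q(0;w) = 1`, since `ρ_n(0) = 0` for `n ≥ 1`, so the generating identity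
becomes `(∑ β_n(0) wⁿ) · [(-w;q^{1/2})_∞ - (w;q^{1/2})_∞] = w (w;q^{1/2})_∞`. The right side does
not vanish for small `w ≠ 0`, hence neither does the bracket, and dividing the identity at `x` by
the one at `0` gives `∑ β_n(x) wⁿ = (∑ β_n(0) wⁿ) · 𝓔_q(x;w)`. The expansion is the Cauchy product
of the two series read coefficientwise. The one analytic input is that the series of `𝓔_q(x;·)`
converges absolutely near `0`: writing `x = (z + 1/z)/2`, the product formula for `ρ_n` gives
`|ρ_n(x)| ≤ Aⁿ q^{-n²/4}`, because the negative exponents among `2 - n + 2j` (`j < n - 1`) add up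
to at least `-n²/4`.
-/

open Finset Topology

theorem eq_zero_of_hasSum_pow_eq_zero {d : ℕ → ℂ} {r : ℝ} (hr : 0 < r)
    (h : ∀ w : ℂ, 0 < ‖w‖ → ‖w‖ < r → HasSum (fun n ↦ d n * w ^ n) 0) : d = 0 := by
  set p := FormalMultilinearSeries.ofScalars ℂ d
  have hw₀ : ‖((r / 2 : ℝ) : ℂ)‖ = r / 2 := by
    rw [Complex.norm_real, Real.norm_of_nonneg (by positivity)]
  have hrad : 0 < p.radius := by
    have hsum := (h _ (by rw [hw₀]; positivity) (by rw [hw₀]; linarith)).summable.norm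
    refine lt_of_lt_of_le ?_ (p.le_radius_of_summable (r := ⟨r / 2, by positivity⟩) ?_)
    · exact ENNReal.coe_pos.2 (NNReal.coe_pos.1 (half_pos hr))
    · refine hsum.congr fun n ↦ ?_
      rw [norm_mul, norm_pow, hw₀, FormalMultilinearSeries.ofScalars_norm]
      rfl
  have hp := (p.hasFPowerSeriesOnBall hrad).hasFPowerSeriesAt
  have hzero : ∀ᶠ w in 𝓝[≠] (0 : ℂ), p.sum w = 0 := by
    have hball : ∀ᶠ w in 𝓝[≠] (0 : ℂ), w ∈ Metric.ball (0 : ℂ) r :=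
      nhdsWithin_le_nhds (Metric.ball_mem_nhds 0 hr)
    filter_upwards [hball, self_mem_nhdsWithin] with w hwr hw0
    rw [mem_ball_zero_iff] at hwr
    rw [show p.sum w = ∑' n, d n • w ^ n from FormalMultilinearSeries.ofScalars_sum_eq d w]
    simpa using (h w (norm_pos_iff.2 hw0) hwr).tsum_eq
  by_contra hd
  have hne := hp.locally_ne_zero ((FormalMultilinearSeries.ofScalars_series_eq_zero ℂ).not.2 hd)
  obtain ⟨w, hw, hw'⟩ := (hzero.and hne).exists
  exact hw' hw

theorem hasSum_sum_range_mul_pow {a b : ℕ → ℂ} {w A B : ℂ}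
    (ha : HasSum (fun n ↦ a n * w ^ n) A) (hb : HasSum (fun n ↦ b n * w ^ n) B) :
    HasSum (fun n ↦ (∑ k ∈ range (n + 1), a k * b (n - k)) * w ^ n) (A * B) := by
  have h := hasSum_sum_range_mul_of_summable_norm ha.summable.norm hb.summable.norm
  rw [ha.tsum_eq, hb.tsum_eq] at h
  have hterm : ∀ n, (∑ k ∈ range (n + 1), a k * b (n - k)) * w ^ n =
      ∑ k ∈ range (n + 1), a k * w ^ k * (b (n - k) * w ^ (n - k)) := fun n ↦ by
    rw [sum_mul]
    refine sum_congr rfl fun k hk ↦ ?_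
    rw [← pow_mul_pow_sub w (mem_range_succ_iff.1 hk)]
    ring
  simpa only [hterm] using h

theorem qpInf_ne_zero {s a : ℂ} (hs : ‖s‖ < 1) (ha : ‖a‖ < 1) : qpInf s a ≠ 0 := by
  have hlt : ∀ j : ℕ, ‖a * s ^ j‖ < 1 := fun j ↦ by
    rw [norm_mul, norm_pow]
    exact mul_lt_one_of_nonneg_of_lt_one_left (norm_nonneg a) ha
      (pow_le_one₀ (norm_nonneg s) hs.le)
  have hsum : Summable fun j : ℕ ↦ ‖-(a * s ^ j)‖ := by
    simpa [norm_mul, norm_pow] using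
      (summable_geometric_of_lt_one (norm_nonneg s) hs).mul_left ‖a‖
  simp_rw [qpInf, sub_eq_add_neg]
  refine tprod_one_add_ne_zero_of_summable (fun j ↦ ?_) hsum
  rw [← sub_eq_add_neg, sub_ne_zero]
  exact fun h ↦ (hlt j).ne (by rw [← h, norm_one])

theorem pow_le_norm_qp {s : ℂ} (hs : ‖s‖ ≤ 1) (n : ℕ) : (1 - ‖s‖) ^ n ≤ ‖qp s s n‖ := by
  rw [qp, norm_prod, pow_eq_prod_const]
  refine prod_le_prod (fun _ _ ↦ sub_nonneg.2 hs) fun j _ ↦ ?_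
  calc 1 - ‖s‖ ≤ 1 - ‖s * s ^ j‖ := by
        rw [norm_mul, norm_pow]
        gcongr
        exact mul_le_of_le_one_right (norm_nonneg s) (pow_le_one₀ (norm_nonneg s) hs)
    _ ≤ ‖1 - s * s ^ j‖ := by simpa using norm_sub_norm_le (1 : ℂ) (s * s ^ j)

theorem exists_ne_zero_half_add_inv_eq (x : ℂ) : ∃ z : ℂ, z ≠ 0 ∧ (z + z⁻¹) / 2 = x := by
  obtain ⟨s, hs⟩ := IsAlgClosed.exists_pow_nat_eq (x ^ 2 - 1) two_pos
  have hprod : (x + s) * (x - s) = 1 := by linear_combination -hs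
  refine ⟨x + s, left_ne_zero_of_mul_eq_one hprod, ?_⟩
  rw [inv_eq_of_mul_eq_one_right hprod]
  ring

theorem four_mul_sum_range_sub_le_sq (m : ℕ) : 4 * ∑ j ∈ range m, (m - 1 - 2 * j) ≤ m ^ 2 := by
  induction m using Nat.twoStepInduction with
  | zero => simp
  | one => simp
  | more m ih _ =>
    have hstep : ∑ j ∈ range (m + 2), (m + 2 - 1 - 2 * j) =
        ∑ j ∈ range m, (m - 1 - 2 * j) + (m + 1) := by
      rw [sum_range_succ', sum_range_succ]
      simp only [show ∀ j, m + 2 - 1 - 2 * (j + 1) = m - 1 - 2 * j by omega]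
      omega
    rw [hstep]
    nlinarith

theorem norm_one_add_zpow_mul_le {q : ℝ} (hq0 : 0 < q) (hq1 : q ≤ 1) (e : ℤ) (u : ℂ) :
    ‖1 + (q : ℂ) ^ e * u‖ ≤ (1 + ‖u‖) * q⁻¹ ^ (-e).toNat := by
  have hle : ‖1 + (q : ℂ) ^ e * u‖ ≤ 1 + q ^ e * ‖u‖ := by
    refine (norm_add_le _ _).trans ?_
    rw [norm_one, norm_mul, norm_zpow, Complex.norm_real, Real.norm_of_nonneg hq0.le]
  rcases le_or_gt 0 e with he | he
  · have : q ^ e ≤ 1 := zpow_le_one₀ hq0 hq1 he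
    rw [show (-e).toNat = 0 by omega, pow_zero, mul_one]
    nlinarith [norm_nonneg u]
  · have hpow : q⁻¹ ^ (-e).toNat = q ^ e := by
      rw [inv_pow, ← zpow_natCast, Int.toNat_of_nonneg (by omega), zpow_neg, inv_inv]
    have : 1 ≤ q ^ e := one_le_zpow_of_nonpos₀ hq0 hq1 he.le
    rw [hpow]
    nlinarith [norm_nonneg u]

theorem norm_qp_sq_neg_zpow_mul_le {q : ℝ} (hq0 : 0 < q) (hq1 : q ≤ 1) (n : ℕ) (u : ℂ) :
    ‖qp ((q : ℂ) ^ 2) (-((q : ℂ) ^ ((2 : ℤ) - n) * u)) (n - 1)‖ ≤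
      (1 + ‖u‖) ^ (n - 1) * q⁻¹ ^ ∑ j ∈ range (n - 1), (n - 1 - 1 - 2 * j) := by
  have hfactor : ∀ j ∈ range (n - 1),
      ‖1 - -((q : ℂ) ^ ((2 : ℤ) - n) * u) * ((q : ℂ) ^ 2) ^ j‖ ≤
        (1 + ‖u‖) * q⁻¹ ^ (n - 1 - 1 - 2 * j) := fun j _ ↦ by
    have hexp : (q : ℂ) ^ ((2 : ℤ) - n) * ((q : ℂ) ^ 2) ^ j = (q : ℂ) ^ ((2 : ℤ) - n + 2 * j) := by
      rw [zpow_add₀ (by exact_mod_cast hq0.ne'), ← pow_mul, ← zpow_natCast]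
      push_cast
      ring_nf
    rw [show (n - 1 - 1 - 2 * j) = (-((2 : ℤ) - n + 2 * j)).toNat by omega, neg_mul,
      sub_neg_eq_add, mul_right_comm, hexp]
    exact norm_one_add_zpow_mul_le hq0 hq1 _ u
  rw [qp, norm_prod]
  refine (prod_le_prod (fun _ _ ↦ norm_nonneg _) hfactor).trans_eq ?_
  rw [prod_mul_distrib, prod_const, card_range, prod_pow_eq_pow_sum]

namespace IsRho

variable {q : ℝ} {ρ : ℕ → ℂ → ℂ}

theorem apply_zero (hρ : IsRho q ρ) {n : ℕ} (hn : n ≠ 0) : ρ n 0 = 0 := by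
  have h := (hρ.2 n (Nat.one_le_iff_ne_zero.2 hn)).2 I I_ne_zero
  rw [show (I + I⁻¹) / 2 = 0 by simp [Complex.inv_I]] at h
  simp [h, Complex.I_sq]

theorem eqf_zero (hρ : IsRho q ρ) (w : ℂ) : Eqf q ρ 0 w = 1 := by
  rw [Eqf, tsum_eq_single 0 fun n hn ↦ by rw [hρ.apply_zero hn, mul_zero, zero_mul]]
  simp [hρ.1, qpow, qp]

theorem exists_norm_qpow_mul_le (hq0 : 0 < q) (hq1 : q ≤ 1) (hρ : IsRho q ρ) (x : ℂ) :
    ∃ A : ℝ, 0 < A ∧ ∀ n : ℕ, ‖qpow q ((n : ℝ) ^ 2 / 4) * ρ n x‖ ≤ A ^ n := by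
  obtain ⟨z, hz, rfl⟩ := exists_ne_zero_half_add_inv_eq x
  have hz' : 0 < ‖z‖ := norm_pos_iff.2 hz
  refine ⟨(1 + ‖z‖ ^ 2) * ‖z‖⁻¹, by positivity, fun n ↦ ?_⟩
  rcases Nat.eq_zero_or_pos n with rfl | hn
  · simp [hρ.1, qpow]
  set S := ∑ j ∈ range (n - 1), (n - 1 - 1 - 2 * j)
  have hgauss : q ^ ((n : ℝ) ^ 2 / 4) * q⁻¹ ^ S ≤ 1 := by
    have hS : 4 * S ≤ n ^ 2 :=
      (four_mul_sum_range_sub_le_sq (n - 1)).trans (Nat.pow_le_pow_left (by omega) 2)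
    rw [← Real.rpow_natCast q⁻¹ S, Real.inv_rpow hq0.le, ← Real.rpow_neg hq0.le,
      ← Real.rpow_add hq0]
    refine Real.rpow_le_one hq0.le hq1 ?_
    have : 4 * (S : ℝ) ≤ (n : ℝ) ^ 2 := by exact_mod_cast hS
    linarith
  have h1z : ‖1 + z ^ 2‖ ≤ 1 + ‖z‖ ^ 2 := (norm_add_le _ _).trans_eq (by rw [norm_one, norm_pow])
  rw [(hρ.2 n hn).2 z hz, qpow, norm_mul, norm_mul, norm_mul, Complex.norm_real,
    Real.norm_of_nonneg (by positivity), norm_zpow, zpow_neg, zpow_natCast, ← inv_pow]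
  calc q ^ ((n : ℝ) ^ 2 / 4) * (‖1 + z ^ 2‖ *
        ‖qp ((q : ℂ) ^ 2) (-((q : ℂ) ^ ((2 : ℤ) - n) * z ^ 2)) (n - 1)‖ * ‖z‖⁻¹ ^ n)
      ≤ q ^ ((n : ℝ) ^ 2 / 4) * ((1 + ‖z‖ ^ 2) *
        ((1 + ‖z‖ ^ 2) ^ (n - 1) * q⁻¹ ^ S) * ‖z‖⁻¹ ^ n) := by
        have := norm_qp_sq_neg_zpow_mul_le hq0 hq1 n (z ^ 2)
        rw [norm_pow] at this
        gcongr
    _ = (q ^ ((n : ℝ) ^ 2 / 4) * q⁻¹ ^ S) * ((1 + ‖z‖ ^ 2) * ‖z‖⁻¹) ^ n := by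
        have hpow : (1 + ‖z‖ ^ 2) ^ n = (1 + ‖z‖ ^ 2) * (1 + ‖z‖ ^ 2) ^ (n - 1) := by
          rw [← pow_succ', Nat.sub_add_cancel hn]
        rw [mul_pow, hpow]
        ring
    _ ≤ ((1 + ‖z‖ ^ 2) * ‖z‖⁻¹) ^ n := mul_le_of_le_one_left (by positivity) hgauss

theorem exists_summable_norm_eqf_term (hq0 : 0 < q) (hq1 : q < 1) (hρ : IsRho q ρ) (x : ℂ) :
    ∃ R : ℝ, 0 < R ∧ ∀ w : ℂ, ‖w‖ < R → Summable fun n : ℕ ↦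
      ‖qpow q ((n : ℝ) ^ 2 / 4) / qp (q : ℂ) (q : ℂ) n * ρ n x * w ^ n‖ := by
  obtain ⟨A, hA, hρA⟩ := hρ.exists_norm_qpow_mul_le hq0 hq1.le x
  have hq : ‖(q : ℂ)‖ = q := by rw [Complex.norm_real, Real.norm_of_nonneg hq0.le]
  have hq' : 0 < 1 - q := sub_pos.2 hq1
  refine ⟨(1 - q) / A, by positivity, fun w hw ↦ ?_⟩
  have hratio : A * ‖w‖ / (1 - q) < 1 := by
    rw [div_lt_one hq']
    rwa [lt_div_iff₀ hA, mul_comm] at hw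
  refine .of_nonneg_of_le (fun _ ↦ norm_nonneg _) (fun n ↦ ?_)
    (summable_geometric_of_lt_one (by positivity) hratio)
  have hqp := pow_le_norm_qp (s := (q : ℂ)) (by rw [hq]; exact hq1.le) n
  rw [hq] at hqp
  calc ‖qpow q ((n : ℝ) ^ 2 / 4) / qp (q : ℂ) (q : ℂ) n * ρ n x * w ^ n‖
      = ‖qpow q ((n : ℝ) ^ 2 / 4) * ρ n x‖ / ‖qp (q : ℂ) (q : ℂ) n‖ * ‖w‖ ^ n := by
        rw [norm_mul, norm_mul, norm_div, norm_mul, norm_pow]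
        ring
    _ ≤ A ^ n / (1 - q) ^ n * ‖w‖ ^ n := by
        gcongr
        exact hρA n
    _ = (A * ‖w‖ / (1 - q)) ^ n := by rw [div_pow, mul_pow]; ring

end IsRho

namespace IsSmallB

variable {q : ℝ} {ρ β : ℕ → ℂ → ℂ}

theorem exists_hasSum_eq_mul_eqf (hq0 : 0 < q) (hq1 : q < 1) (hρ : IsRho q ρ)
    (hβ : IsSmallB q ρ β) (x : ℂ) :
    ∃ r : ℝ, 0 < r ∧ ∀ w : ℂ, 0 < ‖w‖ → ‖w‖ < r → ∃ S₀ : ℂ,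
      HasSum (fun n ↦ β n 0 * w ^ n) S₀ ∧ HasSum (fun n ↦ β n x * w ^ n) (S₀ * Eqf q ρ x w) := by
  obtain ⟨rx, hrx, hrx1, hx⟩ := hβ.2 x
  obtain ⟨r₀, hr₀, -, h₀⟩ := hβ.2 0
  refine ⟨min rx r₀, lt_min hrx hr₀, fun w hw hwr ↦ ?_⟩
  have hwx : ‖w‖ < rx := hwr.trans_le (min_le_left _ _)
  obtain ⟨Sx, hSx, eqx⟩ := hx w hwx
  obtain ⟨S₀, hS₀, eq₀⟩ := h₀ w (hwr.trans_le (min_le_right _ _))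
  rw [hρ.eqf_zero, mul_one] at eq₀
  have hs : ‖qpow q (1 / 2)‖ < 1 := by
    rw [qpow, Complex.norm_real, Real.norm_of_nonneg (by positivity)]
    exact Real.rpow_lt_one hq0.le hq1 (by norm_num)
  have hP : w * qpInf (qpow q (1 / 2)) w ≠ 0 :=
    mul_ne_zero (norm_pos_iff.1 hw) (qpInf_ne_zero hs (hwx.trans_le hrx1))
  have hD : qpInf (qpow q (1 / 2)) (-w) - qpInf (qpow q (1 / 2)) w ≠ 0 := fun hD ↦
    hP (by rw [← eq₀, hD, mul_zero])
  refine ⟨S₀, hS₀, ?_⟩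
  convert hSx using 1
  refine mul_right_cancel₀ hD ?_
  linear_combination Eqf q ρ x w * eq₀ - eqx

end IsSmallB

/-- Expansion of the q-Bernoulli polynomial `β_n(x;q)` in the
basis `ρ_k` with coefficients given by the q-Bernoulli numbers `β_m(0;q)`. -/
theorem qBernoulli_rho_expansion (q : ℝ) (hq0 : 0 < q) (hq1 : q < 1)
    (ρ : ℕ → ℂ → ℂ) (hρ : IsRho q ρ)
    (β : ℕ → ℂ → ℂ) (hβ : IsSmallB q ρ β) :
    ∀ (n : ℕ) (x : ℂ),
      β n x = ∑ k ∈ Finset.range (n + 1),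
        β (n - k) 0 * (qpow q ((k : ℝ) ^ 2 / 4) / qp (q : ℂ) (q : ℂ) k) * ρ k x := by
  intro n x
  obtain ⟨r, hr, hgen⟩ := hβ.exists_hasSum_eq_mul_eqf hq0 hq1 hρ x
  obtain ⟨R, hR, hE⟩ := hρ.exists_summable_norm_eqf_term hq0 hq1 x
  have hdiff : (fun m ↦ β m x - ∑ k ∈ range (m + 1),
      β (m - k) 0 * (qpow q ((k : ℝ) ^ 2 / 4) / qp (q : ℂ) (q : ℂ) k) * ρ k x) = 0 := by
    refine eq_zero_of_hasSum_pow_eq_zero (lt_min hr hR) fun w hw hwr ↦ ?_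
    obtain ⟨S₀, hS₀, hSx⟩ := hgen w hw (hwr.trans_le (min_le_left _ _))
    have hEw : HasSum (fun k : ℕ ↦ qpow q ((k : ℝ) ^ 2 / 4) / qp (q : ℂ) (q : ℂ) k * ρ k x * w ^ k)
        (Eqf q ρ x w) := (hE w (hwr.trans_le (min_le_right _ _))).of_norm.hasSum
    have hsub := hSx.sub (hasSum_sum_range_mul_pow hEw hS₀)
    rw [mul_comm S₀, sub_self] at hsub
    refine hsub.congr_fun fun m ↦ ?_
    rw [sub_mul]
    congr 2
    exact sum_congr rfl fun k _ ↦ by ring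
  exact sub_eq_zero.1 (congrFun hdiff n)

end
end

section
/- Let 0<q<1. For every n≥0, the q-Bernoulli numbers β_n(q²) to base q² and the Ismail–Mansour q-Bernoulli numbers B_n(q) are related by β_n(q²) = B_n(q) · 2^{n−1}(1−q)/(q;q)_n. -/
open Complex Filter

noncomputable section

/-- the q-factorial `[n]_q! = (q;q)_n / (1-q)^n` -/
def qfact (q : ℂ) (n : ℕ) : ℂ := qp q q n / (1 - q) ^ n

/-! Substituting `y = 2w/(1-q)` in the Ismail–Mansour relation and clearing the denominator
`(w;q)_∞` shows that the numbers `B_n(q) 2^{n-1}(1-q)/(q;q)_n` satisfy the generating relation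
of the `β_n(q²)`. That relation determines its coefficients: for real `0 < t < 1` the factor
`(-t;q)_∞ - (t;q)_∞` is positive, so the difference of the two generating functions vanishes at
points accumulating at `0`, and the identity theorem makes all its coefficients zero. -/

open scoped Topology

theorem eq_zero_of_frequently_tsum_pow_eq_zero {𝕜 : Type*} [NontriviallyNormedField 𝕜]
    [CompleteSpace 𝕜] {c : ℕ → 𝕜} {z₀ : 𝕜} (hz₀ : z₀ ≠ 0)
    (hsum : Summable fun n => c n * z₀ ^ n)
    (hzero : ∃ᶠ z in 𝓝[≠] 0, ∑' n, c n * z ^ n = 0) : c = 0 := by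
  set p := FormalMultilinearSeries.ofScalars 𝕜 c
  have hrad : 0 < p.radius := by
    refine lt_of_lt_of_le (by simpa using hz₀) (p.le_radius_of_tendsto (r := ‖z₀‖₊) (l := 0) ?_)
    simpa [p, FormalMultilinearSeries.ofScalars_norm, norm_mul, norm_pow] using
      hsum.tendsto_atTop_zero.norm
  have hp : HasFPowerSeriesAt (fun z => ∑' n, c n * z ^ n) p 0 := by
    rw [← show p.sum = fun z => ∑' n, c n * z ^ n from
      FormalMultilinearSeries.ofScalarsSum_eq_tsum c]
    exact (p.hasFPowerSeriesOnBall hrad).hasFPowerSeriesAt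
  have hev := hp.analyticAt.frequently_zero_iff_eventually_zero.mp hzero
  exact (FormalMultilinearSeries.ofScalars_series_eq_zero (E := 𝕜)).mp
    (hp.eq_zero_of_eventually hev)

theorem Complex.frequently_nhdsNE_zero_of_forall_pos {P : ℂ → Prop} {ε : ℝ} (hε : 0 < ε)
    (hP : ∀ t : ℝ, 0 < t → t < ε → P t) : ∃ᶠ z in 𝓝[≠] 0, P z := by
  have hlim : Tendsto (fun t : ℝ => (t : ℂ)) (𝓝[>] 0) (𝓝[≠] 0) :=
    tendsto_nhdsWithin_of_tendsto_nhds_of_eventually_within _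
      (by simpa using (continuous_ofReal.tendsto 0).mono_left nhdsWithin_le_nhds)
      (eventually_nhdsWithin_of_forall fun t ht => by simpa using ht.ne')
  refine hlim.frequently (Eventually.frequently ?_)
  filter_upwards [Ioo_mem_nhdsGT hε] with t ht using hP t ht.1 ht.2

theorem Real.tprod_one_sub_lt_tprod_one_add {f : ℕ → ℝ} (hf : Summable f) (hf0 : ∀ j, 0 ≤ f j)
    (hf1 : ∀ j, f j < 1) (hpos : 0 < f 0) : ∏' j, (1 - f j) < ∏' j, (1 + f j) := by
  have hsub : Summable fun j => Real.log (1 + -f j) := Real.summable_log_one_add_of_summable hf.neg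
  have hadd : Summable fun j => Real.log (1 + f j) := Real.summable_log_one_add_of_summable hf
  simp only [← sub_eq_add_neg] at hsub
  rw [← Real.rexp_tsum_eq_tprod (fun j => by linarith [hf1 j]) hsub,
    ← Real.rexp_tsum_eq_tprod (fun j => by linarith [hf0 j]) hadd, Real.exp_lt_exp]
  refine hsub.tsum_lt_tsum (i := 0) (fun j => ?_) ?_ hadd
  · exact Real.log_le_log (by linarith [hf1 j]) (by linarith [hf0 j])
  · exact Real.log_lt_log (by linarith [hf1 0]) (by linarith)

theorem qpInf_ne_zero_s7 {q w : ℂ} (hq : ‖q‖ < 1) (hw : ‖w‖ < 1) : qpInf q w ≠ 0 := by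
  have hterm : ∀ j : ℕ, ‖w * q ^ j‖ < 1 := fun j => by
    rw [norm_mul, norm_pow]
    exact mul_lt_one_of_nonneg_of_lt_one_left (norm_nonneg w) hw
      (pow_le_one₀ (norm_nonneg q) hq.le)
  simp only [qpInf, sub_eq_add_neg]
  refine tprod_one_add_ne_zero_of_summable (fun j h => ?_) ?_
  · have hone : w * q ^ j = 1 := by linear_combination -h
    simpa [hone] using hterm j
  · simpa [norm_mul, norm_pow] using
      (summable_geometric_of_lt_one (norm_nonneg q) hq).mul_left ‖w‖

theorem qpInf_ofReal (q a : ℝ) : qpInf (q : ℂ) (a : ℂ) = ((∏' j : ℕ, (1 - a * q ^ j) : ℝ) : ℂ) := by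
  simpa [qpInf] using (Complex.isometry_ofReal.isClosedEmbedding.map_tprod (g := Complex.ofRealHom)
    fun j : ℕ => 1 - a * q ^ j).symm

theorem qpInf_neg_sub_qpInf_ne_zero {q t : ℝ} (hq0 : 0 ≤ q) (hq1 : q < 1) (ht0 : 0 < t)
    (ht1 : t < 1) : qpInf (q : ℂ) (-t) - qpInf (q : ℂ) t ≠ 0 := by
  have hlt := Real.tprod_one_sub_lt_tprod_one_add (f := fun j => t * q ^ j)
    ((summable_geometric_of_lt_one hq0 hq1).mul_left t) (fun j => by positivity)
    (fun j => mul_lt_one_of_nonneg_of_lt_one_left ht0.le ht1 (pow_le_one₀ hq0 hq1.le))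
    (by simpa using ht0)
  rw [← Complex.ofReal_neg, qpInf_ofReal, qpInf_ofReal, ← Complex.ofReal_sub,
    Complex.ofReal_ne_zero, sub_ne_zero]
  simp only [neg_mul, sub_neg_eq_add]
  exact hlt.ne'

def PowerSeriesSolves (a : ℕ → ℂ) (D F : ℂ → ℂ) : Prop :=
  ∃ r : ℝ, 0 < r ∧ ∀ w : ℂ, ‖w‖ < r → ∃ S : ℂ, HasSum (fun n => a n * w ^ n) S ∧ S * D w = F w

theorem PowerSeriesSolves.sub {a b : ℕ → ℂ} {D F G : ℂ → ℂ} (ha : PowerSeriesSolves a D F)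
    (hb : PowerSeriesSolves b D G) : PowerSeriesSolves (a - b) D (F - G) := by
  obtain ⟨ra, hra, ha⟩ := ha
  obtain ⟨rb, hrb, hb⟩ := hb
  refine ⟨min ra rb, lt_min hra hrb, fun w hw => ?_⟩
  obtain ⟨Sa, hSa, hFa⟩ := ha w (hw.trans_le (min_le_left _ _))
  obtain ⟨Sb, hSb, hFb⟩ := hb w (hw.trans_le (min_le_right _ _))
  refine ⟨Sa - Sb, by simpa only [Pi.sub_apply, sub_mul] using hSa.sub hSb, ?_⟩
  rw [Pi.sub_apply, ← hFa, ← hFb, sub_mul]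

theorem PowerSeriesSolves.eq_zero {c : ℕ → ℂ} {D : ℂ → ℂ} (h : PowerSeriesSolves c D 0)
    {ε : ℝ} (hε : 0 < ε) (hD : ∀ t : ℝ, 0 < t → t < ε → D t ≠ 0) : c = 0 := by
  obtain ⟨r, hr, h⟩ := h
  have hρ : 0 < min r ε := lt_min hr hε
  have hsum_real : ∀ t : ℝ, 0 < t → t < min r ε → HasSum (fun n => c n * (t : ℂ) ^ n) 0 := by
    intro t ht0 htρ
    obtain ⟨S, hS, hSD⟩ := h t (by simpa [abs_of_pos ht0] using htρ.trans_le (min_le_left _ _))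
    rwa [(mul_eq_zero.mp hSD).resolve_right (hD t ht0 (htρ.trans_le (min_le_right _ _)))] at hS
  refine eq_zero_of_frequently_tsum_pow_eq_zero (z₀ := ((min r ε / 2 : ℝ) : ℂ))
    (by exact_mod_cast (half_pos hρ).ne') (hsum_real _ (half_pos hρ) (half_lt_self hρ)).summable
    (Complex.frequently_nhdsNE_zero_of_forall_pos hρ fun t ht0 htρ => ?_)
  exact (hsum_real t ht0 htρ).tsum_eq

theorem PowerSeriesSolves.unique {a b : ℕ → ℂ} {D F : ℂ → ℂ} (ha : PowerSeriesSolves a D F)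
    (hb : PowerSeriesSolves b D F) {ε : ℝ} (hε : 0 < ε)
    (hD : ∀ t : ℝ, 0 < t → t < ε → D t ≠ 0) : a = b :=
  sub_eq_zero.mp ((sub_self F ▸ ha.sub hb).eq_zero hε hD)

theorem powerSeriesSolves_of_ismailMansour {q : ℂ} (hq : ‖q‖ < 1) {B : ℕ → ℂ}
    (hB : ∃ r : ℝ, 0 < r ∧ ∀ y : ℂ, ‖y‖ < r → ∃ S : ℂ,
      HasSum (fun n : ℕ => B n * y ^ n / qfact q n) S ∧
      S * (qpInf q (-((1 - q) * y / 2)) / qpInf q ((1 - q) * y / 2) - 1) = y) :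
    PowerSeriesSolves (fun n => B n * (2 : ℂ) ^ ((n : ℤ) - 1) * (1 - q) / qp q q n)
      (fun w => qpInf q (-w) - qpInf q w) (fun w => w * qpInf q w) := by
  obtain ⟨r, hr, hB⟩ := hB
  have hq1 : 1 - q ≠ 0 := sub_ne_zero.mpr fun h => by simp [← h] at hq
  refine ⟨min (r * ‖1 - q‖ / 2) 1, lt_min (by positivity) one_pos, fun w hw => ?_⟩
  have hy : ‖2 * w / (1 - q)‖ < r := by
    rw [norm_div, norm_mul, div_lt_iff₀ (norm_pos_iff.mpr hq1)]
    have := hw.trans_le (min_le_left _ _)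
    norm_num
    linarith
  obtain ⟨S, hS, hrel⟩ := hB _ hy
  rw [show (1 - q) * (2 * w / (1 - q)) / 2 = w by field_simp] at hrel
  have hP := qpInf_ne_zero_s7 hq (hw.trans_le (min_le_right _ _))
  refine ⟨(1 - q) / 2 * S, ?_, ?_⟩
  · refine (hS.mul_left ((1 - q) / 2)).congr_fun fun n => ?_
    dsimp only
    rw [zpow_sub₀ (two_ne_zero' ℂ), zpow_one, zpow_natCast, qfact, div_pow]
    field_simp
    ring
  · field_simp at hrel
    linear_combination hrel / 2

/-- Relation between the q-Bernoulli numbers `β_n(q²)` to base `q²`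
and the Ismail–Mansour q-Bernoulli numbers `B_n(q)`. -/
theorem beta_numbers_vs_IsmailMansour (q : ℝ) (hq0 : 0 < q) (hq1 : q < 1)
    (βn Bn : ℕ → ℂ)
    (hβ : ∃ r : ℝ, 0 < r ∧ ∀ w : ℂ, ‖w‖ < r → ∃ S : ℂ,
      HasSum (fun n : ℕ => βn n * w ^ n) S ∧
      S * (qpInf (q : ℂ) (-w) - qpInf (q : ℂ) w) = w * qpInf (q : ℂ) w)
    (hB : ∃ r : ℝ, 0 < r ∧ ∀ y : ℂ, ‖y‖ < r → ∃ S : ℂ,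
      HasSum (fun n : ℕ => Bn n * y ^ n / qfact (q : ℂ) n) S ∧
      S * (qpInf (q : ℂ) (-((1 - (q : ℂ)) * y / 2)) / qpInf (q : ℂ) ((1 - (q : ℂ)) * y / 2) - 1)
        = y) :
    ∀ n : ℕ, βn n = Bn n * (2 : ℂ) ^ ((n : ℤ) - 1) * (1 - (q : ℂ)) / qp (q : ℂ) (q : ℂ) n := by
  have hq : ‖(q : ℂ)‖ < 1 := by simpa [abs_of_pos hq0] using hq1
  have hβ' : PowerSeriesSolves βn (fun w => qpInf (q : ℂ) (-w) - qpInf (q : ℂ) w)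
      (fun w => w * qpInf (q : ℂ) w) := hβ
  exact congrFun ((hβ'.unique (powerSeriesSolves_of_ismailMansour hq hB) one_pos
    fun t ht0 ht1 => qpInf_neg_sub_qpInf_ne_zero hq0.le hq1 ht0 ht1))

end
end

section
/- Let p>0, p≠1, and let δ, T, D_p be as in the context, with a sequence of polynomials (φ_n) satisfying the stated conditions. Then every complex polynomial f of degree at most n has the expansion f = f(0) + Σ_{k=1}^{n} c_k·φ_k, where c_k = [(T(D_p^{k−1} f))(0) − (D_p^{k−1} f)(0)]/[k]_p!. -/
open Polynomial

noncomputable section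

/-- the p-number `[n]_p = (1-p^n)/(1-p)` -/
def pnum (p : ℝ) (n : ℕ) : ℂ := (1 - (p : ℂ) ^ n) / (1 - (p : ℂ))

/-- the p-factorial `[n]_p!` -/
def pfact (p : ℝ) (n : ℕ) : ℂ := ∏ j ∈ Finset.range n, pnum p (j + 1)

/-- the p-binomial coefficient -/
def pbinom (p : ℝ) (n k : ℕ) : ℂ := pfact p n / (pfact p k * pfact p (n - k))

/-- `D` is the p-difference operator, the linear operator with `D X^n = [n]_p X^{n-1}` -/
def IsDp (p : ℝ) (D : Module.End ℂ (Polynomial ℂ)) : Prop :=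
  ∀ n : ℕ, D (X ^ n) = Polynomial.C (pnum p n) * X ^ (n - 1)

/-- `T` is the linear operator with `T X^n = Σ_{k≤n} C_p(n,k) δ_k X^{n-k}` -/
def IsTp (p : ℝ) (δ : ℕ → ℂ) (T : Module.End ℂ (Polynomial ℂ)) : Prop :=
  ∀ n : ℕ, T (X ^ n) =
    ∑ k ∈ Finset.range (n + 1), Polynomial.C (pbinom p n k * δ k) * X ^ (n - k)

/-- `φ` is a sequence of polynomials with `deg φ_n = n`, `φ_0 = 1`, `φ_n(0) = 0` and
`Tφ_n − φ_n = [n]_p X^{n-1}` for `n ≥ 1` -/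
def IsPhi (p : ℝ) (T : Module.End ℂ (Polynomial ℂ)) (φ : ℕ → Polynomial ℂ) : Prop :=
  φ 0 = 1 ∧
  (∀ n : ℕ, 1 ≤ n → (φ n).natDegree = n ∧ (φ n).eval 0 = 0) ∧
  ∀ n : ℕ, 1 ≤ n → T (φ n) - φ n = Polynomial.C (pnum p n) * X ^ (n - 1)

/-! Both sides are linear in `f`, and `φ 0, …, φ n` span the polynomials of degree `≤ n` since
`deg φ_j = j`, so it suffices to treat `f = φ j`. A p-binomial identity makes `T` commute with
`D_p`, and `(T - 1) φ_j = D_p X^j` for every `j` (for `j = 0` because `T 1 = 1`), so the `k`-th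
coefficient of `φ_j` is `(D_p^k X^j)(0) / [k]_p!`, which is `1` if `j = k` and `0` otherwise. -/

open Finset

section PNumbers

variable {p : ℝ}

@[simp]
lemma pnum_zero : pnum p 0 = 0 := by simp [pnum]

lemma pnum_ne_zero (hp0 : 0 < p) (hp1 : p ≠ 1) {n : ℕ} (hn : n ≠ 0) : pnum p n ≠ 0 := by
  have hp1' : (p : ℂ) ≠ 1 := by exact_mod_cast hp1
  have hpn : (p : ℂ) ^ n ≠ 1 := by
    exact_mod_cast fun h => hp1 ((pow_eq_one_iff_of_nonneg hp0.le hn).mp h)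
  exact div_ne_zero (sub_ne_zero.mpr hpn.symm) (sub_ne_zero.mpr hp1'.symm)

@[simp]
lemma pfact_zero : pfact p 0 = 1 := prod_range_zero _

lemma pfact_succ (n : ℕ) : pfact p (n + 1) = pfact p n * pnum p (n + 1) :=
  prod_range_succ _ _

lemma pfact_eq_prod_pnum_sub (n : ℕ) : pfact p n = ∏ i ∈ range n, pnum p (n - i) := by
  rw [pfact, ← prod_range_reflect]
  exact prod_congr rfl fun i hi => by rw [mem_range] at hi; congr 1; omega

lemma pfact_ne_zero (hp0 : 0 < p) (hp1 : p ≠ 1) (n : ℕ) : pfact p n ≠ 0 :=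
  prod_ne_zero_iff.mpr fun _ _ => pnum_ne_zero hp0 hp1 (Nat.succ_ne_zero _)

lemma pbinom_succ_mul_pnum_sub (hp0 : 0 < p) (hp1 : p ≠ 1) {n k : ℕ} (h : k ≤ n) :
    pbinom p (n + 1) k * pnum p (n + 1 - k) = pnum p (n + 1) * pbinom p n k := by
  obtain ⟨t, rfl⟩ := Nat.exists_eq_add_of_le h
  rw [pbinom, pbinom, show k + t + 1 - k = t + 1 by omega, Nat.add_sub_cancel_left, pfact_succ,
    pfact_succ]
  have := pfact_ne_zero hp0 hp1 k
  have := pfact_ne_zero hp0 hp1 t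
  have := pnum_ne_zero hp0 hp1 (Nat.succ_ne_zero t)
  field_simp

end PNumbers

namespace IsDp

variable {p : ℝ} {D : Module.End ℂ ℂ[X]}

lemma map_C_mul_X_pow (hD : IsDp p D) (a : ℂ) (n : ℕ) :
    D (C a * X ^ n) = C (a * pnum p n) * X ^ (n - 1) := by
  rw [← smul_eq_C_mul, map_smul, hD n, smul_eq_C_mul, ← mul_assoc, ← C_mul]

lemma map_C (hD : IsDp p D) (a : ℂ) : D (C a) = 0 := by
  simpa using hD.map_C_mul_X_pow a 0

/-- For `k > n` the product contains the factor `pnum p 0 = 0`. -/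
lemma pow_apply_X_pow (hD : IsDp p D) (k n : ℕ) :
    (D ^ k) (X ^ n) = C (∏ i ∈ range k, pnum p (n - i)) * X ^ (n - k) := by
  induction k with
  | zero => simp
  | succ k ih =>
    rw [pow_succ', Module.End.mul_apply, ih, hD.map_C_mul_X_pow, prod_range_succ, Nat.sub_sub]

lemma eval_zero_pow_apply_X_pow (hD : IsDp p D) (k n : ℕ) :
    ((D ^ k) (X ^ n)).eval 0 = if n = k then pfact p k else 0 := by
  rw [hD.pow_apply_X_pow, eval_mul, eval_C, eval_pow, eval_X]
  rcases lt_trichotomy n k with hlt | rfl | hgt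
  · rw [prod_eq_zero (mem_range.mpr hlt) (by simp), zero_mul, if_neg hlt.ne]
  · rw [Nat.sub_self, pow_zero, mul_one, if_pos rfl, pfact_eq_prod_pnum_sub]
  · rw [zero_pow (by omega), mul_zero, if_neg hgt.ne']

end IsDp

namespace IsTp

variable {p : ℝ} {δ : ℕ → ℂ} {T : Module.End ℂ ℂ[X]}

lemma map_one (hδ0 : δ 0 = 1) (hT : IsTp p δ T) : T 1 = 1 := by
  simpa [pbinom, hδ0] using hT 0

lemma commute_isDp (hp0 : 0 < p) (hp1 : p ≠ 1) {D : Module.End ℂ ℂ[X]} (hD : IsDp p D)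
    (hT : IsTp p δ T) : Commute D T := by
  refine lhom_ext' fun n => LinearMap.ext_ring ?_
  simp only [LinearMap.comp_apply, Module.End.mul_apply, monomial_one_right_eq_X_pow]
  rw [hT n, map_sum, hD n]
  simp only [hD.map_C_mul_X_pow]
  rcases n with _ | m
  · simp
  rw [← smul_eq_C_mul, map_smul, Nat.add_sub_cancel, hT m, smul_sum, sum_range_succ, Nat.sub_self,
    pnum_zero, mul_zero, map_zero, zero_mul, add_zero]
  refine sum_congr rfl fun k hk => ?_
  rw [mem_range] at hk
  rw [smul_eq_C_mul, ← mul_assoc, ← C_mul, show m + 1 - k - 1 = m - k by omega]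
  congr 2
  linear_combination δ k * pbinom_succ_mul_pnum_sub hp0 hp1 (Nat.lt_succ_iff.mp hk)

end IsTp

namespace IsPhi

variable {p : ℝ} {δ : ℕ → ℂ} {D T : Module.End ℂ ℂ[X]} {φ : ℕ → ℂ[X]}

lemma degree_eq (hφ : IsPhi p T φ) (n : ℕ) : (φ n).degree = n := by
  rcases Nat.eq_zero_or_pos n with rfl | hn
  · simp [hφ.1]
  have hdeg := (hφ.2.1 n hn).1
  have hne : φ n ≠ 0 := by rintro h; rw [h, natDegree_zero] at hdeg; omega
  rw [degree_eq_natDegree hne, hdeg]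

lemma mem_span_image_Iic (hφ : IsPhi p T φ) {f : ℂ[X]} {n : ℕ} (hf : f.natDegree ≤ n) :
    f ∈ Submodule.span ℂ (φ '' Set.Iic n) := by
  let S : Sequence ℂ := ⟨φ, hφ.degree_eq⟩
  have hspan := S.span_degreeLE (m := n) fun i _ => (leadingCoeff_ne_zero.mpr (S.ne_zero i)).isUnit
  exact hspan ▸ mem_degreeLE.mpr (natDegree_le_iff_degree_le.mp hf)

lemma sub_one_apply (hδ0 : δ 0 = 1) (hD : IsDp p D) (hT : IsTp p δ T) (hφ : IsPhi p T φ)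
    (n : ℕ) : (T - 1) (φ n) = D (X ^ n) := by
  rcases Nat.eq_zero_or_pos n with rfl | hn
  · simpa [hφ.1, hT.map_one hδ0] using (hD.map_C 1).symm
  · rw [LinearMap.sub_apply, Module.End.one_apply, hφ.2.2 n hn, hD n]

lemma eval_zero_sub_one_apply_pow_apply (hp0 : 0 < p) (hp1 : p ≠ 1) (hδ0 : δ 0 = 1)
    (hD : IsDp p D) (hT : IsTp p δ T) (hφ : IsPhi p T φ) {k : ℕ} (hk : 1 ≤ k) (j : ℕ) :
    ((T - 1) ((D ^ (k - 1)) (φ j))).eval 0 = if j = k then pfact p k else 0 := by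
  have hcomm : Commute (D ^ (k - 1)) (T - 1) :=
    ((hT.commute_isDp hp0 hp1 hD).sub_right (Commute.one_right D)).pow_left (k - 1)
  rw [← Module.End.mul_apply, ← hcomm.eq, Module.End.mul_apply,
    hφ.sub_one_apply hδ0 hD hT, ← Module.End.mul_apply, ← pow_succ, Nat.sub_add_cancel hk,
    hD.eval_zero_pow_apply_X_pow]

end IsPhi

def phiExpansion (p : ℝ) (D T : Module.End ℂ ℂ[X]) (φ : ℕ → ℂ[X]) (n : ℕ) :
    Module.End ℂ ℂ[X] :=
  (leval 0).smulRight 1 +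
    ∑ k ∈ Icc 1 n, ((pfact p k)⁻¹ • leval 0 ∘ₗ (T - 1) ∘ₗ D ^ (k - 1)).smulRight (φ k)

lemma phiExpansion_apply (p : ℝ) (D T : Module.End ℂ ℂ[X]) (φ : ℕ → ℂ[X]) (n : ℕ) (f : ℂ[X]) :
    phiExpansion p D T φ n f = C (f.eval 0) +
      ∑ k ∈ Icc 1 n, C (((T ((D ^ (k - 1)) f)).eval 0 - ((D ^ (k - 1)) f).eval 0) / pfact p k) *
        φ k := by
  simp [phiExpansion, smul_eq_C_mul, div_eq_inv_mul]

lemma phiExpansion_apply_phi {p : ℝ} {δ : ℕ → ℂ} {D T : Module.End ℂ ℂ[X]} {φ : ℕ → ℂ[X]}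
    (hp0 : 0 < p) (hp1 : p ≠ 1) (hδ0 : δ 0 = 1) (hD : IsDp p D) (hT : IsTp p δ T)
    (hφ : IsPhi p T φ) {n j : ℕ} (hj : j ≤ n) :
    phiExpansion p D T φ n (φ j) = φ j := by
  have hcoeff : ∀ k ∈ Icc 1 n,
      C (((T ((D ^ (k - 1)) (φ j))).eval 0 - ((D ^ (k - 1)) (φ j)).eval 0) / pfact p k) * φ k =
        if j = k then φ j else 0 := by
    intro k hk
    have h := hφ.eval_zero_sub_one_apply_pow_apply hp0 hp1 hδ0 hD hT (mem_Icc.mp hk).1 j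
    rw [LinearMap.sub_apply, Module.End.one_apply, eval_sub] at h
    rw [h]
    split_ifs with hjk
    · rw [hjk, div_self (pfact_ne_zero hp0 hp1 k), C_1, one_mul]
    · rw [zero_div, C_0, zero_mul]
  rw [phiExpansion_apply, sum_congr rfl hcoeff, sum_ite_eq]
  rcases Nat.eq_zero_or_pos j with rfl | hj0
  · simp [hφ.1]
  · simp [(hφ.2.1 j hj0).2, hj, Nat.one_le_iff_ne_zero.mpr hj0.ne']

/-- Every polynomial `f` of degree at most `n` expands as
`f = f(0) + Σ_{k=1}^n c_k φ_k` with `c_k = [(T D_p^{k-1} f)(0) − (D_p^{k-1} f)(0)]/[k]_p!`. -/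
theorem phi_expansion_of_polynomials (p : ℝ) (hp0 : 0 < p) (hp1 : p ≠ 1)
    (δ : ℕ → ℂ) (hδ0 : δ 0 = 1)
    (D : Module.End ℂ (Polynomial ℂ)) (hD : IsDp p D)
    (T : Module.End ℂ (Polynomial ℂ)) (hT : IsTp p δ T)
    (φ : ℕ → Polynomial ℂ) (hφ : IsPhi p T φ)
    (f : Polynomial ℂ) (n : ℕ) (hf : f.natDegree ≤ n) :
    f = Polynomial.C (f.eval 0) +
      ∑ k ∈ Finset.Icc 1 n,
        Polynomial.C (((T ((D ^ (k - 1)) f)).eval 0 - ((D ^ (k - 1)) f).eval 0) / pfact p k) *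
          φ k := by
  have hfix : Set.EqOn (phiExpansion p D T φ n) (LinearMap.id : Module.End ℂ ℂ[X])
      (φ '' Set.Iic n) := by
    rintro _ ⟨j, hj, rfl⟩
    exact phiExpansion_apply_phi hp0 hp1 hδ0 hD hT hφ hj
  rw [← phiExpansion_apply]
  exact (LinearMap.eqOn_span' hfix (hφ.mem_span_image_Iic hf)).symm

end
end
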